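/- arXiv:1701.01580 — 8 statements merged into one kernel-verified Lean document; each statement's English description precedes it below -/
import Mathlib

section
/- For any nonempty word w over a finite alphabet Σ and any letter x in Σ, if wx is closed (i.e., wx has a border with no internal occurrence in wx), then wx has the same smallest period as w. -/
open scoped Classical

variable {α : Type*}

def IsBorder (u w : List α) : Prop := u <+: w ∧ u <:+ w ∧ u ≠ w

def InternalOcc (u w : List α) : Prop := ∃ p s : List α, p ≠ [] ∧ s ≠ [] ∧ w = p ++ u ++ s

def ClosedWord (w : List α) : Prop := w = [] ∨ ∃ u, IsBorder u w ∧ ¬ InternalOcc u w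

noncomputable def minPer (w : List α) : ℕ :=
  if w = [] then 1 else sInf {p | ∃ v, IsBorder v w ∧ p = w.length - v.length}

noncomputable def ocL (w : List α) : List ℕ :=
  (List.range w.length).map fun i => if ClosedWord (w.take (i+1)) then 1 else 0

def prefW (w : ℕ → α) (n : ℕ) : List α := (List.range n).map w

noncomputable def ocI (w : ℕ → α) : ℕ → ℕ := fun n =>
  if ClosedWord (prefW w (n+1)) then 1 else 0

def InfixAt (w : ℕ → α) (u : List α) (i : ℕ) : Prop :=
  u = (List.range u.length).map fun j => w (i + j)

def RecurrentWord (w : ℕ → α) : Prop :=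
  ∀ u : List α, (∃ i, InfixAt w u i) → ∀ N, ∃ i, N ≤ i ∧ InfixAt w u i

def UltPeriodic (s : ℕ → α) : Prop := ∃ p, 0 < p ∧ ∃ N, ∀ n, N ≤ n → s (n + p) = s n

def PerWord (s : ℕ → α) : Prop := ∃ p, 0 < p ∧ ∀ n, s (n + p) = s n

def OccurrenceAt (u w : List α) (i : ℕ) : Prop := i + u.length ≤ w.length ∧ u <+: w.drop i

def RepeatedIn (u w : List α) : Prop := ∃ i j, i < j ∧ OccurrenceAt u w i ∧ OccurrenceAt u w j

def CompleteReturnTo (w u : List α) : Prop :=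
  u <+: w ∧ u <:+ w ∧ u ≠ w ∧ ∀ i, OccurrenceAt u w i → i = 0 ∨ i = w.length - u.length

def BalancedWord (w : List Bool) : Prop :=
  ∀ u v : List Bool, u <:+: w → v <:+: w → u.length = v.length →
    ((u.count true : ℤ) - v.count true).natAbs ≤ 1

def RightSpecialSturmian (w : List Bool) : Prop := ∀ x : Bool, BalancedWord (w ++ [x])

def stdSeq (d : ℕ → ℕ) : ℕ → List Bool
  | 0 => [true]
  | 1 => [false]
  | n+2 => (List.replicate (d n) (stdSeq d (n+1))).flatten ++ stdSeq d n

def stdInf (d : ℕ → ℕ) : ℕ → Bool := fun i => (stdSeq d (i+2)).getD i false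

def IsStandardWord (s : List Bool) : Prop :=
  ∃ d : ℕ → ℕ, (∀ n, 1 ≤ n → 1 ≤ d n) ∧ ∃ m, s = stdSeq d m

def IsCentral (u : List Bool) : Prop := ∃ x y : Bool, x ≠ y ∧ IsStandardWord (u ++ [x, y])

def LeftSpecial (u w : List Bool) : Prop := (false :: u) <:+: w ∧ (true :: u) <:+: w

def RightSpecial (u w : List Bool) : Prop := (u ++ [false]) <:+: w ∧ (u ++ [true]) <:+: w

def IsSemicentral (v : List Bool) : Prop :=
  ∃ u : List Bool,
    (u <+: v ∧ RepeatedIn u v ∧ ∀ z, z <+: v → RepeatedIn z v → z.length ≤ u.length) ∧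
    (u <:+ v ∧ RepeatedIn u v ∧ ∀ z, z <:+ v → RepeatedIn z v → z.length ≤ u.length) ∧
    (LeftSpecial u v ∧ ∀ z, LeftSpecial z v → z.length ≤ u.length ∧ (z.length = u.length → z = u)) ∧
    (RightSpecial u v ∧ ∀ z, RightSpecial z v → z.length ≤ u.length ∧ (z.length = u.length → z = u))

def contFront : List ℕ → ℕ
  | [] => 1
  | [x] => x
  | x :: y :: l => x * contFront (y :: l) + contFront l

def paperK (l : List ℕ) : ℕ := contFront l.reverse

noncomputable def lbl (u : List α) : ℕ := sSup {n | ∃ v, IsBorder v u ∧ v.length = n}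

noncomputable def Bp (w : List α) (i : ℕ) : ℕ :=
  (Finset.range (i+1)).sup fun j => lbl (w.take j)

/-!
A border `u` of `wx` without internal occurrences is the longest border of `wx`: a longer border
would contain `u` as a proper suffix. It is nonempty, so `u = u'x` with `u'` a border of `w`, and
`u'` is the longest border of `w`, since a border `v` of `w` with `|v| ≥ |u|` begins with `u`,
and this copy of `u` inside the suffix occurrence of `v` in `w` is internal in `wx`.
Hence both minimal periods equal `|w| - |u'|`.
-/

namespace IsBorder

variable {u v w : List α}

theorem length_lt (h : IsBorder u w) : u.length < w.length :=
  lt_of_le_of_ne h.1.length_le fun hlen => h.2.2 (h.1.eq_of_length hlen)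

theorem of_append_singleton {c x : α} (h : IsBorder (u ++ [c]) (w ++ [x])) : IsBorder u w := by
  have hlen : u.length < w.length := by simpa using h.length_lt
  obtain ⟨t, ht⟩ := h.2.1
  rw [← List.append_assoc] at ht
  refine ⟨?_, ⟨t, (List.append_inj' ht rfl).1⟩, fun huw => hlen.ne (congrArg List.length huw)⟩
  exact List.prefix_of_prefix_length_le ((List.prefix_append u [c]).trans h.1)
    (List.prefix_append w [x]) hlen.le

theorem length_le_of_not_internalOcc (hv : IsBorder v w) (hu : IsBorder u w)
    (hocc : ¬ InternalOcc u w) : v.length ≤ u.length := by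
  by_contra! hlen
  obtain ⟨t, rfl⟩ := List.suffix_of_suffix_length_le hu.2.1 hv.2.1 hlen.le
  obtain ⟨s, hs⟩ := hv.1
  refine hocc ⟨t, s, ?_, ?_, hs.symm⟩
  · rintro rfl
    simp at hlen
  · rintro rfl
    exact hv.2.2 (by simpa using hs)

theorem length_lt_of_not_internalOcc {x : α} (hv : IsBorder v w) (hu : u <+: w ++ [x])
    (hocc : ¬ InternalOcc u (w ++ [x])) : v.length < u.length := by
  by_contra! hlen
  obtain ⟨r, rfl⟩ :=
    List.prefix_of_prefix_length_le hu (hv.1.trans (List.prefix_append w [x])) hlen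
  obtain ⟨t, rfl⟩ := hv.2.1
  refine hocc ⟨t, r ++ [x], ?_, by simp, by simp⟩
  rintro rfl
  exact hv.2.2 (by simp)

end IsBorder

theorem minPer_eq_of_isBorder {v w : List α} (hv : IsBorder v w)
    (hmax : ∀ v', IsBorder v' w → v'.length ≤ v.length) :
    minPer w = w.length - v.length := by
  have hw : w ≠ [] := by
    rintro rfl
    exact hv.2.2 (List.prefix_nil.mp hv.1)
  rw [minPer, if_neg hw]
  refine le_antisymm (Nat.sInf_le ⟨v, hv, rfl⟩) (le_csInf ⟨_, v, hv, rfl⟩ ?_)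
  rintro _ ⟨v', hv', rfl⟩
  have := hmax v' hv'
  omega

theorem internalOcc_nil {w : List α} (hw : 2 ≤ w.length) : InternalOcc [] w := by
  refine ⟨w.take 1, w.drop 1, ?_, ?_, by rw [List.append_nil, List.take_append_drop]⟩ <;>
    simp [← List.length_eq_zero_iff] <;> omega

theorem stmt0_general {α : Type*} (w : List α) (hw : w ≠ []) (x : α)
    (h : ClosedWord (w ++ [x])) : minPer (w ++ [x]) = minPer w := by
  obtain h | ⟨u, hu, hocc⟩ := h
  · simp at h
  obtain rfl | ⟨u', c, rfl⟩ := u.eq_nil_or_concat'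
  · refine absurd (internalOcc_nil ?_) hocc
    simpa [Nat.one_le_iff_ne_zero] using hw
  have hu' : IsBorder u' w := hu.of_append_singleton
  have hmax' : ∀ v, IsBorder v w → v.length ≤ u'.length := fun v hv => by
    simpa [Nat.lt_succ_iff] using hv.length_lt_of_not_internalOcc hu.1 hocc
  rw [minPer_eq_of_isBorder hu fun v hv => hv.length_le_of_not_internalOcc hu hocc,
    minPer_eq_of_isBorder hu' hmax']
  simp

theorem stmt0 {α : Type*} [Fintype α] (w : List α) (hw : w ≠ []) (x : α)
    (h : ClosedWord (w ++ [x])) : minPer (w ++ [x]) = minPer w :=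
  stmt0_general w hw x h
end

section
/- For every nonempty word w over a finite alphabet Σ, there exists at most one letter x in Σ such that wx is closed. -/
/-! Nonempty borders of `w ++ [x]` and of `w ++ [y]` are prefixes of `w`, so one of them, `u`,
is a prefix of the other, `v = v' ++ [y]`, where `w = t ++ v'` with `t ≠ []`. If `u = v`, its
last letter is both `x` and `y`. Otherwise `u <+: v'`, so `t ++ u` is a prefix of `w` and `u` has
an internal occurrence in `w ++ [x]`. -/

open scoped Classical

variable {α : Type*}

namespace IsBorder

variable {u w : List α} {x : α}

theorem prefix_of_append_singleton (h : IsBorder u (w ++ [x])) : u <+: w :=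
  (List.prefix_concat_iff.1 h.1).resolve_left h.2.2

theorem exists_of_append_singleton (h : IsBorder u (w ++ [x])) (hu : u ≠ []) :
    ∃ t u', t ≠ [] ∧ w = t ++ u' ∧ u = u' ++ [x] := by
  obtain ⟨u', rfl, t, rfl⟩ := (List.suffix_concat_iff.1 h.2.1).resolve_left hu
  exact ⟨t, u', by rintro rfl; exact h.2.2 rfl, rfl, rfl⟩

end IsBorder

theorem internalOcc_nil_append_singleton {w : List α} (hw : w ≠ []) (x : α) :
    InternalOcc [] (w ++ [x]) :=
  ⟨w, [x], hw, List.cons_ne_nil x [], by simp⟩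

theorem eq_of_isBorder_of_prefix {u v w : List α} {x y : α}
    (hu : IsBorder u (w ++ [x])) (hu_closed : ¬ InternalOcc u (w ++ [x]))
    (hv : IsBorder v (w ++ [y])) (hv_ne : v ≠ []) (huv : u <+: v) : x = y := by
  obtain ⟨t, v', ht, rfl, rfl⟩ := hv.exists_of_append_singleton hv_ne
  rcases List.prefix_concat_iff.1 huv with rfl | ⟨r, rfl⟩
  · obtain ⟨-, u', -, -, hu'⟩ := hu.exists_of_append_singleton (by simp)
    simpa using (List.append_inj' hu' rfl).2.symm
  · exact absurd ⟨t, r ++ [x], ht, by simp, by simp⟩ hu_closed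

theorem stmt1_general {α : Type*} (w : List α) (hw : w ≠ []) (x y : α)
    (hx : ClosedWord (w ++ [x])) (hy : ClosedWord (w ++ [y])) : x = y := by
  obtain hx | ⟨u, hu, hu_closed⟩ := hx
  · simp at hx
  obtain hy | ⟨v, hv, hv_closed⟩ := hy
  · simp at hy
  have hu_ne : u ≠ [] := by rintro rfl; exact hu_closed (internalOcc_nil_append_singleton hw x)
  have hv_ne : v ≠ [] := by rintro rfl; exact hv_closed (internalOcc_nil_append_singleton hw y)
  rcases List.prefix_or_prefix_of_prefix hu.prefix_of_append_singleton
      hv.prefix_of_append_singleton with huv | hvu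
  · exact eq_of_isBorder_of_prefix hu hu_closed hv hv_ne huv
  · exact (eq_of_isBorder_of_prefix hv hv_closed hu hu_ne hvu).symm

theorem stmt1 {α : Type*} [Fintype α] (w : List α) (hw : w ≠ []) (x y : α)
    (hx : ClosedWord (w ++ [x])) (hy : ClosedWord (w ++ [y])) : x = y :=
  stmt1_general w hw x y hx hy
end

section
/- Every finite word whose exponent is at least 2 (i.e., whose length is at least twice its minimal period) is closed. -/
open scoped Classical

variable {α : Type*}

/-! If `p` is the least period of `w` and `|w| ≥ 2p`, the border `v = w.drop p` has length
`≥ p`. An internal occurrence of `v` at position `0 < i < p` makes the prefix of `w` of length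
`i + |v| ≥ p + i` have the periods `p` and `i`, hence, by Fine and Wilf, the period `gcd p i`.
As this divides `p` and the prefix contains a full `p`-period, `gcd p i < p` is a period of `w`. -/

namespace List

theorem hasPeriod_iff_drop_prefix {w : List α} {p : ℕ} : HasPeriod w p ↔ w.drop p <+: w := by
  refine ⟨HasPeriod.drop_prefix p, fun h => ?_⟩
  have := (prefix_append_right_inj (take p w)).2 h
  rwa [take_append_drop] at this

theorem hasPeriod_length_append_iff {a v : List α} :
    HasPeriod (a ++ v) a.length ↔ v <+: a ++ v := by
  rw [hasPeriod_iff_drop_prefix, drop_left]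

theorem HasPeriod.of_prefix_of_dvd {u w : List α} {p q : ℕ} (hp : 0 < p) (hw : HasPeriod w p)
    (hu : u <+: w) (hpu : p ≤ u.length) (hq : HasPeriod u q) (hqp : q ∣ p) : HasPeriod w q := by
  rw [hasPeriod_iff_forall_getElem?_mod] at hw hq ⊢
  have hu' : ∀ j < u.length, u[j]? = w[j]? := fun j hj => by
    obtain ⟨t, rfl⟩ := hu
    exact (getElem?_append_left hj).symm
  intro j hj
  have hjp : j % p < u.length := (Nat.mod_lt j hp).trans_le hpu
  calc w[j]? = w[j % p]? := hw j hj
    _ = u[j % p]? := (hu' _ hjp).symm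
    _ = u[j % p % q]? := hq _ hjp
    _ = w[j % q]? := by
      have := Nat.mod_le (j % p) q
      rw [Nat.mod_mod_of_dvd j hqp] at this ⊢
      exact hu' _ (by omega)

theorem HasPeriod.isBorder_drop {w : List α} {p : ℕ} (hw : HasPeriod w p) (hp : 0 < p)
    (hpw : p ≤ w.length) : IsBorder (w.drop p) w :=
  ⟨hasPeriod_iff_drop_prefix.1 hw, drop_suffix p w, fun h => by
    have := congrArg length h
    simp only [length_drop] at this
    omega⟩

theorem HasPeriod.exists_lt_of_internalOcc {w : List α} {p : ℕ} (hw : HasPeriod w p)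
    (hp : 0 < p) (h2p : 2 * p ≤ w.length) (hocc : InternalOcc (w.drop p) w) :
    ∃ q, 0 < q ∧ q < p ∧ HasPeriod w q := by
  obtain ⟨a, b, ha, hb, hab⟩ := hocc
  have hlen := congrArg length hab
  simp only [length_append, length_drop] at hlen
  have hb0 := length_pos_iff.2 hb
  have hu : a ++ w.drop p <+: w := ⟨b, hab.symm⟩
  have hv : w.drop p <+: a ++ w.drop p :=
    prefix_of_prefix_length_le (hasPeriod_iff_drop_prefix.1 hw) hu (by simp)
  have hper : HasPeriod (a ++ w.drop p) (p.gcd a.length) :=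
    (hw.infix hu.isInfix).gcd (hasPeriod_length_append_iff.2 hv)
      (by simp only [length_append, length_drop]; omega)
  refine ⟨p.gcd a.length, Nat.gcd_pos_of_pos_left _ hp, ?_, ?_⟩
  · exact (Nat.gcd_le_right _ (length_pos_iff.2 ha)).trans_lt (by omega)
  · exact hw.of_prefix_of_dvd hp hu (by simp only [length_append, length_drop]; omega) hper
      (Nat.gcd_dvd_left _ _)

end List

section

open List

theorem IsBorder.length_lt_s4 {v w : List α} (h : IsBorder v w) : v.length < w.length :=
  lt_of_le_of_ne h.1.length_le fun hlen => h.2.2 (h.1.eq_of_length hlen)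

theorem IsBorder.hasPeriod {v w : List α} (h : IsBorder v w) :
    HasPeriod w (w.length - v.length) := by
  rw [hasPeriod_iff_drop_prefix, ← suffix_iff_eq_drop.1 h.2.1]
  exact h.1

theorem minPer_le_of_hasPeriod {w : List α} {p : ℕ} (hw : HasPeriod w p) (hp : 0 < p)
    (hpw : p ≤ w.length) : minPer w ≤ p := by
  have hne : w ≠ [] := ne_nil_of_length_pos (hp.trans_le hpw)
  rw [minPer, if_neg hne]
  exact Nat.sInf_le ⟨_, hw.isBorder_drop hp hpw, by simp only [length_drop]; omega⟩

theorem minPer_spec {w : List α} (hne : w ≠ []) :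
    0 < minPer w ∧ minPer w ≤ w.length ∧ HasPeriod w (minPer w) := by
  have hmem : minPer w ∈ {p | ∃ v, IsBorder v w ∧ p = w.length - v.length} := by
    rw [minPer, if_neg hne]
    exact Nat.sInf_mem ⟨w.length, [], ⟨nil_prefix, nil_suffix, hne.symm⟩, by simp⟩
  obtain ⟨v, hv, hper⟩ := hmem
  have := hv.length_lt_s4
  exact ⟨by omega, by omega, hper ▸ hv.hasPeriod⟩

end

theorem stmt4 {α : Type*} (w : List α) (h : 2 * minPer w ≤ w.length) : ClosedWord w := by
  rcases eq_or_ne w [] with rfl | hne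
  · exact Or.inl rfl
  obtain ⟨hp, hpw, hper⟩ := minPer_spec hne
  refine Or.inr ⟨w.drop (minPer w), hper.isBorder_drop hp hpw, fun hocc => ?_⟩
  obtain ⟨q, hq, hqp, hperq⟩ := hper.exists_lt_of_internalOcc hp h hocc
  exact (minPer_le_of_hasPeriod hperq hq (hqp.le.trans hpw)).not_gt hqp
end

section
/- For an infinite word w over a finite alphabet, the following are equivalent: (1) the oc-sequence of w is recurrent; (2) w = x^ω for some letter x; (3) the oc-sequence of w is the constant sequence 1^ω. -/
open scoped Classical

variable {α : Type*}

/-!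
Let `B n` (`maxRepeatedPrefix w n`) be the length of the longest border of a prefix of `w` of
length at most `n`. A prefix of length `n + 1 ≥ 2` is closed exactly when `B` grows at `n`, and
then its closing border is the prefix of length `B n + 1`; otherwise `B` stays put. So `B` counts
the closed prefixes.

If every prefix is closed, `B (n + 1) = n`, so the prefix of length `n + 1` has a border of length
`n` and `w` is constant; a constant word clearly has only closed prefixes. If `oc(w)` is recurrent
but has a `0`, the factor `1 0^j 1` (`j ≥ 1`) occurs arbitrarily far out. Across each occurrence
the closing border grows by one letter while its starting position moves by `j`, so ever longer
prefixes of `w` are `j`-periodic, and `w` is `j`-periodic. Then `B n ≥ n - j`, which leaves fewer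
than `j` non-closed prefixes, whereas recurrence makes the `0`s of `oc(w)` infinitely many.
-/

section Prefixes

variable {w : ℕ → α}

@[simp] lemma length_prefW (w : ℕ → α) (n : ℕ) : (prefW w n).length = n := by
  simp [prefW]

lemma prefW_add (w : ℕ → α) (m k : ℕ) :
    prefW w (m + k) = prefW w m ++ (List.range k).map fun t => w (m + t) := by
  simp [prefW, List.range_add]

lemma eq_prefW_of_prefix {v : List α} {n : ℕ} (h : v <+: prefW w n) : v = prefW w v.length := by
  obtain ⟨s, hs⟩ := h
  have hn : n = v.length + s.length := by simpa using (congrArg List.length hs).symm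
  rw [hn, prefW_add] at hs
  exact (List.append_inj hs (by simp)).1

lemma infixAt_prefW_iff {k i : ℕ} : InfixAt w (prefW w k) i ↔ ∀ t < k, w (i + t) = w t := by
  simp [InfixAt, prefW, List.map_inj_left, eq_comm]

lemma isBorder_prefW_iff {k n : ℕ} :
    IsBorder (prefW w k) (prefW w n) ↔ k < n ∧ ∀ t < k, w (n - k + t) = w t := by
  rw [← infixAt_prefW_iff]
  constructor
  · rintro ⟨-, hsuf, hne⟩
    have hk : k ≤ n := by simpa using hsuf.length_le
    refine ⟨lt_of_le_of_ne hk fun h => hne (h ▸ rfl), ?_⟩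
    rw [List.suffix_iff_eq_drop] at hsuf
    obtain ⟨m, rfl⟩ := Nat.exists_eq_add_of_le' hk
    simpa [InfixAt, prefW_add, List.drop_left'] using hsuf
  · rintro ⟨hk, hocc⟩
    obtain ⟨m, rfl⟩ := Nat.exists_eq_add_of_le' hk.le
    refine ⟨?_, ?_, fun h => ?_⟩
    · rw [Nat.add_comm m k, prefW_add]
      exact List.prefix_append _ _
    · have hk' : prefW w k = (List.range k).map fun t => w (m + t) := by
        simpa [InfixAt] using hocc
      rw [prefW_add, hk']
      exact List.suffix_append _ _
    · simp [show m = 0 by simpa using congrArg List.length h] at hk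

lemma internalOcc_prefW_iff {u : List α} {n : ℕ} :
    InternalOcc u (prefW w n) ↔ ∃ i, 0 < i ∧ i + u.length < n ∧ InfixAt w u i := by
  constructor
  · rintro ⟨p, s, hp, hs, h⟩
    have hn : n = p.length + u.length + s.length := by
      simpa [add_assoc] using congrArg List.length h
    rw [hn, prefW_add, prefW_add] at h
    refine ⟨p.length, List.length_pos_iff.mpr hp, ?_, ?_⟩
    · rw [hn]
      exact Nat.lt_add_of_pos_right (List.length_pos_iff.mpr hs)
    · exact (List.append_inj (List.append_inj h (by simp)).1 (by simp)).2.symm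
  · rintro ⟨i, hi, hlt, hu⟩
    obtain ⟨r, rfl⟩ := Nat.exists_eq_add_of_le hlt.le
    refine ⟨prefW w i, (List.range r).map fun t => w (i + u.length + t), ?_, ?_, ?_⟩
    · exact List.ne_nil_of_length_pos (by simpa using hi)
    · exact List.ne_nil_of_length_pos (by simp; omega)
    · rw [InfixAt] at hu
      rw [prefW_add w (i + u.length), prefW_add w i, ← hu]

end Prefixes

lemma exists_gap_around {P : ℕ → Prop} {a n b : ℕ} (ha : P a) (han : a ≤ n) (hn : ¬ P n)
    (hb : P b) (hnb : n ≤ b) :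
    ∃ a' b', a' < n ∧ n < b' ∧ P a' ∧ P b' ∧ ∀ t, a' < t → t < b' → ¬ P t := by
  have hex : ∃ k, n < k ∧ P k := ⟨b, lt_of_le_of_ne hnb (by rintro rfl; exact hn hb), hb⟩
  have hgreatest : P (Nat.findGreatest P n) := Nat.findGreatest_spec han ha
  refine ⟨Nat.findGreatest P n, Nat.find hex, ?_, (Nat.find_spec hex).1, hgreatest,
    (Nat.find_spec hex).2, fun t hat htb ht => ?_⟩
  · exact lt_of_le_of_ne (Nat.findGreatest_le n) fun h => hn (h ▸ hgreatest)
  · rcases le_or_gt t n with htn | htn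
    · exact Nat.findGreatest_is_greatest hat htn ht
    · exact Nat.find_min hex htb ⟨htn, ht⟩

lemma exists_le_of_monotone_of_frequently_lt {f : ℕ → ℕ} (hf : Monotone f)
    (h : ∀ N, ∃ n ≥ N, f n < f (n + 1)) (K : ℕ) : ∃ n, K ≤ f n := by
  induction K with
  | zero => exact ⟨0, Nat.zero_le _⟩
  | succ K ih =>
    obtain ⟨N, hN⟩ := ih
    obtain ⟨n, hn, hlt⟩ := h N
    exact ⟨n + 1, by have := hf hn; omega⟩

lemma RecurrentWord.exists_shift {s : ℕ → α} (h : RecurrentWord s) (a L N : ℕ) :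
    ∃ i ≥ N, ∀ t < L, s (i + t) = s (a + t) := by
  obtain ⟨i, hi, hocc⟩ := h ((List.range L).map fun t => s (a + t)) ⟨a, by simp [InfixAt]⟩ N
  refine ⟨i, hi, fun t ht => ?_⟩
  simp only [InfixAt, List.length_map, List.length_range, List.map_inj_left, List.mem_range]
    at hocc
  exact (hocc t ht).symm

lemma recurrentWord_of_forall_eq {s : ℕ → α} {c : α} (h : ∀ n, s n = c) : RecurrentWord s := by
  rintro u ⟨i, hi⟩ N
  refine ⟨N, le_rfl, ?_⟩
  unfold InfixAt at hi ⊢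
  simpa [h] using hi

section RepeatedPrefix

variable {w : ℕ → α}

lemma ocI_eq_one_iff {n : ℕ} : ocI w n = 1 ↔ ClosedWord (prefW w (n + 1)) := by
  unfold ocI
  split_ifs <;> simp_all

lemma ocI_le_one (n : ℕ) : ocI w n ≤ 1 := by
  unfold ocI
  split_ifs <;> simp

/-- Equivalently: the prefix of length `k` of `w` is a border of a prefix of length at most `n`. -/
def PrefixRepeats (w : ℕ → α) (n k : ℕ) : Prop :=
  ∃ i, 0 < i ∧ i + k ≤ n ∧ ∀ t < k, w (i + t) = w t

lemma PrefixRepeats.lt {n k : ℕ} (h : PrefixRepeats w n k) : k < n := by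
  obtain ⟨i, hi, hik, -⟩ := h
  omega

lemma PrefixRepeats.mono {m n k l : ℕ} (h : PrefixRepeats w m k) (hmn : m ≤ n) (hlk : l ≤ k) :
    PrefixRepeats w n l := by
  obtain ⟨i, hi, hik, hocc⟩ := h
  exact ⟨i, hi, by omega, fun t ht => hocc t (by omega)⟩

lemma PrefixRepeats.of_succ {n k : ℕ} (h : PrefixRepeats w (n + 1) (k + 1)) :
    PrefixRepeats w n k := by
  obtain ⟨i, hi, hik, hocc⟩ := h
  exact ⟨i, hi, by omega, fun t ht => hocc t (by omega)⟩

lemma prefixRepeats_zero {n : ℕ} (hn : 0 < n) : PrefixRepeats w n 0 :=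
  ⟨n, hn, le_rfl, fun _ h => absurd h (Nat.not_lt_zero _)⟩

lemma closedWord_prefW_succ_iff {n : ℕ} :
    ClosedWord (prefW w (n + 1)) ↔ ∃ k, PrefixRepeats w (n + 1) k ∧ ¬ PrefixRepeats w n k := by
  have hne : prefW w (n + 1) ≠ [] := List.ne_nil_of_length_pos (by simp)
  simp only [ClosedWord, hne, false_or]
  constructor
  · rintro ⟨u, hu, hint⟩
    obtain ⟨k, rfl⟩ : ∃ k, u = prefW w k := ⟨_, eq_prefW_of_prefix hu.1⟩
    obtain ⟨hk, hocc⟩ := isBorder_prefW_iff.mp hu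
    refine ⟨k, ⟨n + 1 - k, by omega, by omega, hocc⟩, ?_⟩
    rintro ⟨i, hi, hik, hocc'⟩
    exact hint (internalOcc_prefW_iff.mpr
      ⟨i, hi, by simp only [length_prefW]; omega, infixAt_prefW_iff.mpr hocc'⟩)
  · rintro ⟨k, ⟨i, hi, hik, hocc⟩, hnot⟩
    have hend : i + k = n + 1 := by
      by_contra h
      exact hnot ⟨i, hi, by omega, hocc⟩
    refine ⟨prefW w k, isBorder_prefW_iff.mpr ⟨by omega, ?_⟩, ?_⟩
    · rwa [show n + 1 - k = i by omega]
    · rw [internalOcc_prefW_iff]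
      rintro ⟨i', hi', hlt, hocc'⟩
      simp only [length_prefW] at hlt
      exact hnot ⟨i', hi', by omega, infixAt_prefW_iff.mp hocc'⟩

noncomputable def maxRepeatedPrefix (w : ℕ → α) (n : ℕ) : ℕ :=
  Nat.findGreatest (PrefixRepeats w n) n

lemma prefixRepeats_iff_le {n k : ℕ} (hn : 0 < n) :
    PrefixRepeats w n k ↔ k ≤ maxRepeatedPrefix w n :=
  ⟨fun h => Nat.le_findGreatest h.lt.le h,
    fun h => (Nat.findGreatest_spec (Nat.zero_le n) (prefixRepeats_zero hn)).mono le_rfl h⟩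

lemma maxRepeatedPrefix_lt {n : ℕ} (hn : 0 < n) : maxRepeatedPrefix w n < n :=
  ((prefixRepeats_iff_le hn).mpr le_rfl).lt

lemma maxRepeatedPrefix_mono : Monotone (maxRepeatedPrefix w) :=
  fun _ _ h => Nat.findGreatest_mono (fun _ hk => hk.mono h le_rfl) h

lemma maxRepeatedPrefix_succ {n : ℕ} (hn : 0 < n) :
    maxRepeatedPrefix w (n + 1) = maxRepeatedPrefix w n + ocI w n := by
  have hmono : maxRepeatedPrefix w n ≤ maxRepeatedPrefix w (n + 1) :=
    maxRepeatedPrefix_mono n.le_succ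
  have hstep : maxRepeatedPrefix w (n + 1) ≤ maxRepeatedPrefix w n + 1 := by
    by_contra! h
    have := ((prefixRepeats_iff_le (show 0 < n + 1 by omega)).mpr h).of_succ
    rw [prefixRepeats_iff_le hn] at this
    omega
  have hclosed : ClosedWord (prefW w (n + 1)) ↔
      maxRepeatedPrefix w n < maxRepeatedPrefix w (n + 1) := by
    simp only [closedWord_prefW_succ_iff, prefixRepeats_iff_le hn,
      prefixRepeats_iff_le (show 0 < n + 1 by omega)]
    exact ⟨fun ⟨k, h1, h2⟩ => by omega, fun h => ⟨_, le_rfl, by omega⟩⟩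
  unfold ocI
  split_ifs with h
  · have := hclosed.mp h
    omega
  · have := mt hclosed.mpr h
    omega

/-- At a closed prefix of length `n + 1`, the closing border is the prefix of length
`maxRepeatedPrefix w n + 1`. -/
lemma prefix_occurs_of_ocI_eq_one {n : ℕ} (hn : 0 < n) (h : ocI w n = 1) :
    ∀ t ≤ maxRepeatedPrefix w n, w (n - maxRepeatedPrefix w n + t) = w t := by
  have hsucc := maxRepeatedPrefix_succ (w := w) hn
  rw [h] at hsucc
  obtain ⟨i, hi, hik, hocc⟩ :=
    (prefixRepeats_iff_le (w := w) (show 0 < n + 1 by omega)).mpr hsucc.ge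
  have hnot : ¬ PrefixRepeats w n (maxRepeatedPrefix w n + 1) := by
    rw [prefixRepeats_iff_le hn]
    omega
  have hi : i = n - maxRepeatedPrefix w n := by
    by_contra hne
    exact hnot ⟨i, hi, by omega, hocc⟩
  intro t ht
  rw [← hi]
  exact hocc t (by omega)

lemma maxRepeatedPrefix_add_of_ocI_eq_zero {n j : ℕ} (hn : 0 < n)
    (h : ∀ t < j, ocI w (n + t) = 0) : maxRepeatedPrefix w (n + j) = maxRepeatedPrefix w n := by
  induction j with
  | zero => rfl
  | succ j ih =>
    rw [← add_assoc, maxRepeatedPrefix_succ (by omega), h j j.lt_succ_self,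
      ih fun t ht => h t (by omega), add_zero]

lemma sub_le_maxRepeatedPrefix_of_periodic {j : ℕ} (hj : 0 < j) (hper : ∀ s, w (s + j) = w s)
    (n : ℕ) : n - j ≤ maxRepeatedPrefix w n := by
  rcases le_or_gt n j with hnj | hjn
  · omega
  · exact (prefixRepeats_iff_le (by omega)).mp
      ⟨j, hj, by omega, fun t _ => by rw [add_comm]; exact hper t⟩

lemma sub_maxRepeatedPrefix_mono : Monotone fun n => n - maxRepeatedPrefix w n := by
  refine monotone_nat_of_le_succ fun n => ?_
  rcases Nat.eq_zero_or_pos n with rfl | hn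
  · exact Nat.zero_le _
  · have := maxRepeatedPrefix_lt (w := w) hn
    have := ocI_le_one (w := w) n
    simp only [maxRepeatedPrefix_succ hn]
    omega

lemma exists_le_maxRepeatedPrefix (hones : ∀ N, ∃ n ≥ N, ocI w n = 1) (K : ℕ) :
    ∃ n, K ≤ maxRepeatedPrefix w n := by
  refine exists_le_of_monotone_of_frequently_lt maxRepeatedPrefix_mono (fun N => ?_) K
  obtain ⟨n, hn, h1⟩ := hones (N + 1)
  exact ⟨n, by omega, by rw [maxRepeatedPrefix_succ (by omega), h1]; omega⟩

lemma exists_le_sub_maxRepeatedPrefix (hzeros : ∀ N, ∃ n ≥ N, ocI w n ≠ 1) (K : ℕ) :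
    ∃ n, K ≤ n - maxRepeatedPrefix w n := by
  refine exists_le_of_monotone_of_frequently_lt sub_maxRepeatedPrefix_mono (fun N => ?_) K
  obtain ⟨n, hn, h0⟩ := hzeros (N + 1)
  have := maxRepeatedPrefix_lt (w := w) (show 0 < n by omega)
  have := ocI_le_one (w := w) n
  exact ⟨n, by omega, by simp only [maxRepeatedPrefix_succ (show 0 < n by omega)]; omega⟩

end RepeatedPrefix

section Main

variable {w : ℕ → α}

lemma ocI_zero : ocI w 0 = 1 :=
  ocI_eq_one_iff.mpr <| closedWord_prefW_succ_iff.mpr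
    ⟨0, prefixRepeats_zero one_pos, fun h => Nat.not_lt_zero _ h.lt⟩

lemma ocI_eq_one_of_forall_eq {x : α} (hx : ∀ n, w n = x) (n : ℕ) : ocI w n = 1 :=
  ocI_eq_one_iff.mpr <| closedWord_prefW_succ_iff.mpr
    ⟨n, ⟨1, one_pos, (Nat.add_comm 1 n).le, fun t _ => by rw [hx, hx]⟩, fun h => lt_irrefl n h.lt⟩

lemma forall_eq_of_forall_ocI_eq_one (h : ∀ n, ocI w n = 1) (n : ℕ) : w n = w 0 := by
  have hmax : ∀ n, maxRepeatedPrefix w (n + 1) = n := by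
    intro n
    induction n with
    | zero => exact Nat.lt_one_iff.mp (maxRepeatedPrefix_lt one_pos)
    | succ n ih => rw [maxRepeatedPrefix_succ n.succ_pos, ih, h]
  have hstep : ∀ n, w (n + 1) = w n := fun n => by
    have := prefix_occurs_of_ocI_eq_one n.succ_pos (h (n + 1)) n (hmax n).ge
    rwa [hmax, show n + 1 - n + n = n + 1 by omega] at this
  induction n with
  | zero => rfl
  | succ n ih => rw [hstep, ih]

lemma periodic_of_gap {i j s : ℕ} (hi : 0 < i) (h1 : ocI w i = 1)
    (h0 : ∀ t < j, ocI w (i + 1 + t) = 0) (h1' : ocI w (i + 1 + j) = 1)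
    (hs : s + j ≤ maxRepeatedPrefix w i) : w (s + j) = w s := by
  have hlt := maxRepeatedPrefix_lt (w := w) hi
  have hstall : maxRepeatedPrefix w (i + 1 + j) = maxRepeatedPrefix w i + 1 := by
    rw [maxRepeatedPrefix_add_of_ocI_eq_zero (by omega) h0, maxRepeatedPrefix_succ hi, h1]
  have occ1 := prefix_occurs_of_ocI_eq_one hi h1 (s + j) hs
  have occ2 := prefix_occurs_of_ocI_eq_one (by omega) h1' s (by omega)
  rw [hstall] at occ2
  rw [← occ1, ← occ2]
  congr 1
  omega

lemma ocI_eq_one_of_recurrentWord (h : RecurrentWord (ocI w)) (n : ℕ) : ocI w n = 1 := by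
  by_contra hn
  have recurs : ∀ m N, ∃ i ≥ N, ocI w i = ocI w m := fun m N => by
    obtain ⟨i, hi, hs⟩ := h.exists_shift m 1 N
    exact ⟨i, hi, by simpa using hs 0 one_pos⟩
  have ones : ∀ N, ∃ i ≥ N, ocI w i = 1 := fun N =>
    (recurs 0 N).imp fun _ ⟨hi, he⟩ => ⟨hi, he.trans ocI_zero⟩
  obtain ⟨b, hnb, hb⟩ := ones n
  obtain ⟨a, c, han, hnc, ha, hc, hgap⟩ :=
    exists_gap_around (P := (ocI w · = 1)) ocI_zero (Nat.zero_le n) hn hb hnb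
  have hper : ∀ s, w (s + (c - a - 1)) = w s := fun s => by
    obtain ⟨N, hN⟩ := exists_le_maxRepeatedPrefix ones (s + (c - a - 1))
    obtain ⟨i, hi, hshift⟩ := h.exists_shift a (c - a + 1) (N + 1)
    refine periodic_of_gap (i := i) (by omega) ?_ (fun t ht => ?_) ?_
      (hN.trans (maxRepeatedPrefix_mono (by omega)))
    · simpa [ha] using hshift 0 (by omega)
    · have hne := hgap (a + (1 + t)) (by omega) (by omega)
      have := ocI_le_one (w := w) (a + (1 + t))
      rw [add_assoc, hshift _ (by omega)]
      omega
    · rw [add_assoc, hshift _ (by omega), show a + (1 + (c - a - 1)) = c by omega, hc]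
  obtain ⟨m, hm⟩ := exists_le_sub_maxRepeatedPrefix
    (fun N => (recurs n N).imp fun _ ⟨hi, he⟩ => ⟨hi, he ▸ hn⟩) (c - a)
  have := sub_le_maxRepeatedPrefix_of_periodic (by omega) hper m
  omega

end Main

theorem stmt7_general {α : Type*} (w : ℕ → α) :
    (RecurrentWord (ocI w) ↔ ∃ x : α, ∀ n, w n = x) ∧
    (RecurrentWord (ocI w) ↔ ∀ n, ocI w n = 1) := by
  have hrec : RecurrentWord (ocI w) ↔ ∀ n, ocI w n = 1 :=
    ⟨ocI_eq_one_of_recurrentWord, recurrentWord_of_forall_eq⟩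
  refine ⟨hrec.trans ⟨fun h => ⟨w 0, forall_eq_of_forall_ocI_eq_one h⟩, ?_⟩, hrec⟩
  rintro ⟨x, hx⟩
  exact ocI_eq_one_of_forall_eq hx

theorem stmt7 {α : Type*} [Fintype α] (w : ℕ → α) :
    (RecurrentWord (ocI w) ↔ ∃ x : α, ∀ n, w n = x) ∧
    (RecurrentWord (ocI w) ↔ ∀ n, ocI w n = 1) :=
  stmt7_general w
end

section
/- Let w be a finite or infinite word and s, t positive integers. If 1^t 0^s 1 is a factor of oc(w), then t ≤ s. In other words, in the oc-sequence of any word, every maximal run of 0s is at least as long as the immediately preceding run of 1s. -/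
/-!
Extend a finite word by padding: closedness of a prefix only depends on the prefix. Writing
`w_m` for the prefix of length `m` of an infinite word `W`, `w_m` (for `m > 0`) is closed iff
some `w_b`, `b < m`, occurs in `w_m` only at `0` and at `m - b`; this `b` grows by one with each
letter as long as the prefixes stay closed.

Let the run of closed prefixes end at `w_n`, with border `w_B` and period `P = n - B`, so that
`W n ≠ W B`. While prefixes are open, every occurrence of a border is pushed back to an earlier
one, so the next closed prefix `w_{n+s+1}` has border exactly `w_{B+1}`, sitting at `P + s`.
Hence `w_{B-s}` occurs at `s`. If `s < t`, then `w_{n-s}` was closed with border `w_{B-s}`, and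
the period `P` shifts any occurrence of `w_{B-s}` in `w_n` down to this unique one: so `P ∣ s`,
and `W n = W (B - s) = W B`, a contradiction.
-/

open scoped Classical

variable {α : Type*}

namespace ClosedPrefix

def segment (W : ℕ → α) (i n : ℕ) : List α := (List.range n).map fun k => W (i + k)

def PrefixOccursAt (W : ℕ → α) (l j : ℕ) : Prop := ∀ k < l, W (j + k) = W k

structure ClosedWithBorder (W : ℕ → α) (m b : ℕ) : Prop where
  lt : b < m
  occurs : PrefixOccursAt W b (m - b)
  not_occurs : ∀ j, 0 < j → j + b < m → ¬ PrefixOccursAt W b j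

section Segment

variable (W : ℕ → α)

@[simp]
lemma length_segment (i n : ℕ) : (segment W i n).length = n := by simp [segment]

lemma segment_add (i a b : ℕ) : segment W i (a + b) = segment W i a ++ segment W (i + a) b := by
  simp [segment, List.range_add, Nat.add_assoc]

@[simp]
lemma length_prefW (n : ℕ) : (prefW W n).length = n := by simp [prefW]

lemma prefW_eq_segment (n : ℕ) : prefW W n = segment W 0 n := by simp [prefW, segment]

lemma take_segment {i n l : ℕ} (h : l ≤ n) : (segment W i n).take l = segment W i l := by
  obtain ⟨d, rfl⟩ := Nat.exists_eq_add_of_le h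
  simp [segment_add]

lemma drop_segment {i n d : ℕ} (h : d ≤ n) : (segment W i n).drop d = segment W (i + d) (n - d) := by
  obtain ⟨e, rfl⟩ := Nat.exists_eq_add_of_le h
  simp [segment_add]

lemma infixAt_iff_segment {u : List α} {i : ℕ} : InfixAt W u i ↔ u = segment W i u.length := Iff.rfl

lemma infixAt_prefW_iff {l j : ℕ} : InfixAt W (prefW W l) j ↔ PrefixOccursAt W l j := by
  simp [infixAt_iff_segment, prefW, segment, PrefixOccursAt, eq_comm]

lemma infixAt_of_prefW_eq {n : ℕ} {p u r : List α} (h : prefW W n = p ++ u ++ r) :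
    InfixAt W u p.length := by
  have hn : p.length + u.length ≤ n := by
    have := congrArg List.length h
    simp only [length_prefW, List.length_append] at this
    omega
  have := congrArg (fun v => (v.drop p.length).take u.length) h
  simp only [List.append_assoc, List.drop_left, List.take_left, prefW_eq_segment] at this
  rw [drop_segment W (by omega), take_segment W (by omega), Nat.zero_add] at this
  exact this.symm

end Segment

section Closed

variable (W : ℕ → α)

lemma isBorder_prefW_iff {u : List α} {m : ℕ} :
    IsBorder u (prefW W m) ↔ ∃ l < m, u = prefW W l ∧ PrefixOccursAt W l (m - l) := by
  constructor
  · rintro ⟨hpre, hsuf, hne⟩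
    have hl : u.length ≤ m := by simpa [prefW] using hpre.length_le
    have hu : u = prefW W u.length := by
      rw [List.prefix_iff_eq_take.mp hpre, prefW_eq_segment, prefW_eq_segment, take_segment W hl]
      simp
    have hlt : u.length < m := by
      refine lt_of_le_of_ne hl fun h => hne ?_
      rw [hu, h]
    refine ⟨u.length, hlt, hu, ?_⟩
    obtain ⟨p, hp⟩ := hsuf
    have hp' : prefW W m = p ++ u ++ [] := by simp [hp]
    have hplen : p.length = m - u.length := by
      have := congrArg List.length hp
      simp only [List.length_append, length_prefW] at this
      omega
    rw [← infixAt_prefW_iff, ← hu, ← hplen]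
    exact infixAt_of_prefW_eq W hp'
  · rintro ⟨l, hl, rfl, hocc⟩
    rw [← infixAt_prefW_iff, infixAt_iff_segment, length_prefW] at hocc
    refine ⟨?_, ⟨prefW W (m - l), ?_⟩, fun h => ?_⟩
    · rw [List.prefix_iff_eq_take, length_prefW, prefW_eq_segment, prefW_eq_segment,
        take_segment W hl.le]
    · rw [hocc, prefW_eq_segment, prefW_eq_segment]
      conv_rhs => rw [← Nat.sub_add_cancel hl.le, segment_add, Nat.zero_add]
    · exact hl.ne (by simpa using congrArg List.length h)

lemma internalOcc_prefW_iff {l m : ℕ} :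
    InternalOcc (prefW W l) (prefW W m) ↔ ∃ j, 0 < j ∧ j + l < m ∧ PrefixOccursAt W l j := by
  constructor
  · rintro ⟨p, r, hp, hr, h⟩
    have hlen := congrArg List.length h
    simp only [length_prefW, List.length_append] at hlen
    have := List.length_pos_iff.mpr hp
    have := List.length_pos_iff.mpr hr
    refine ⟨p.length, by omega, by omega, ?_⟩
    simpa using (infixAt_prefW_iff W).mp (infixAt_of_prefW_eq W h)
  · rintro ⟨j, hj, hjl, hocc⟩
    rw [← infixAt_prefW_iff, infixAt_iff_segment, length_prefW] at hocc
    refine ⟨segment W 0 j, segment W (j + l) (m - (j + l)), ?_, ?_, ?_⟩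
    · rw [← List.length_pos_iff, length_segment]; omega
    · rw [← List.length_pos_iff, length_segment]; omega
    · have e₁ := segment_add W 0 j l
      have e₂ := segment_add W 0 (j + l) (m - (j + l))
      rw [Nat.zero_add] at e₁ e₂
      rw [hocc, prefW_eq_segment, ← e₁, ← e₂, Nat.add_sub_cancel' hjl.le]

theorem closedWord_prefW_iff {m : ℕ} (hm : 0 < m) :
    ClosedWord (prefW W m) ↔ ∃ b, ClosedWithBorder W m b := by
  have hne : prefW W m ≠ [] := by simpa [← List.length_pos_iff] using hm
  simp only [ClosedWord, hne, false_or, isBorder_prefW_iff]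
  constructor
  · rintro ⟨_, ⟨b, hb, rfl, hocc⟩, hint⟩
    exact ⟨b, hb, hocc, fun j hj hjb ho => hint ((internalOcc_prefW_iff W).2 ⟨j, hj, hjb, ho⟩)⟩
  · rintro ⟨b, hb, hocc, huniq⟩
    refine ⟨_, ⟨b, hb, rfl, hocc⟩, fun h => ?_⟩
    obtain ⟨j, hj, hjb, ho⟩ := (internalOcc_prefW_iff W).1 h
    exact huniq j hj hjb ho

end Closed

namespace PrefixOccursAt

variable {W : ℕ → α}

lemma mono {l l' j : ℕ} (h : PrefixOccursAt W l j) (hl : l' ≤ l) : PrefixOccursAt W l' j :=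
  fun k hk => h k (by omega)

lemma sub_period {L P l f : ℕ} (hper : PrefixOccursAt W L P) (h : PrefixOccursAt W l f)
    (hPf : P ≤ f) (hfl : f + l ≤ P + L) : PrefixOccursAt W l (f - P) := by
  intro k hk
  rw [← h k hk, ← hper (f - P + k) (by omega)]
  congr 1
  omega

lemma apply_add_mul {L P x : ℕ} (hper : PrefixOccursAt W L P) (c : ℕ) (hx : x + c * P < P + L) :
    W (x + c * P) = W x := by
  induction c with
  | zero => simp
  | succ c ih =>
    rw [← ih (by nlinarith), ← hper (x + c * P) (by nlinarith)]
    congr 1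
    ring

end PrefixOccursAt

namespace ClosedWithBorder

variable {W : ℕ → α} {m b : ℕ}

lemma eq_of_prefixOccursAt (h : ClosedWithBorder W m b) {j : ℕ} (hj : 0 < j) (hjb : j + b ≤ m)
    (ho : PrefixOccursAt W b j) : j = m - b := by
  by_contra hne
  exact h.not_occurs j hj (by omega) ho

lemma succ (h : ClosedWithBorder W m b) (heq : W m = W b) : ClosedWithBorder W (m + 1) (b + 1) where
  lt := by have := h.lt; omega
  occurs k hk := by
    rcases Nat.lt_or_ge k b with hkb | hkb
    · rw [Nat.add_sub_add_right]
      exact h.occurs k hkb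
    · obtain rfl : k = b := by omega
      rw [Nat.add_sub_add_right, Nat.sub_add_cancel h.lt.le, heq]
  not_occurs j hj hjb ho := h.not_occurs j hj (by omega) (ho.mono (by omega))

lemma succ_eq (h : ClosedWithBorder W m b) {b' : ℕ} (h' : ClosedWithBorder W (m + 1) b') :
    b' = b + 1 := by
  have := h.lt
  have := h'.lt
  rcases Nat.lt_or_ge b b' with hbb | hbb
  · have := h.eq_of_prefixOccursAt (j := m + 1 - b') (by omega) (by omega) (h'.occurs.mono hbb.le)
    omega
  · have := h'.eq_of_prefixOccursAt (j := m - b) (by omega) (by omega) (h.occurs.mono hbb)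
    omega

lemma add_of_closedWord (h : ClosedWithBorder W m b) {k : ℕ}
    (hcl : ∀ n, m < n → n ≤ m + k → ClosedWord (prefW W n)) :
    ClosedWithBorder W (m + k) (b + k) := by
  induction k with
  | zero => simpa using h
  | succ k ih =>
    obtain ⟨b', hb'⟩ := (closedWord_prefW_iff W (by omega)).1 (hcl (m + k + 1) (by omega) le_rfl)
    obtain rfl := (ih fun n hn hnk => hcl n hn (by omega)).succ_eq hb'
    exact hb'

lemma dvd_of_prefixOccursAt (h : ClosedWithBorder W m b) {L : ℕ}
    (hper : PrefixOccursAt W L (m - b)) {f : ℕ} (hf : f + b ≤ m - b + L)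
    (ho : PrefixOccursAt W b f) : m - b ∣ f := by
  have := h.lt
  induction f using Nat.strong_induction_on with
  | _ f ih =>
    rcases Nat.eq_zero_or_pos f with rfl | hf0
    · exact dvd_zero _
    rcases Nat.lt_or_ge (m - b) f with hlt | hle
    · have := ih (f - (m - b)) (by omega) (by omega) (hper.sub_period ho hlt.le hf)
      simpa [Nat.sub_add_cancel hlt.le] using Nat.dvd_add this (dvd_refl (m - b))
    · rw [h.eq_of_prefixOccursAt hf0 (by omega) ho]

end ClosedWithBorder

section Run

variable {W : ℕ → α}

lemma exists_prefixOccursAt_of_not_closedWord {n d l j : ℕ}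
    (hopen : ∀ m, n < m → m ≤ n + d → ¬ ClosedWord (prefW W m))
    (hj : 0 < j) (hjl : j + l ≤ n + d) (ho : PrefixOccursAt W l j) :
    ∃ j', 0 < j' ∧ j' + l ≤ n ∧ PrefixOccursAt W l j' := by
  induction d generalizing j with
  | zero => exact ⟨j, hj, hjl, ho⟩
  | succ d ih =>
    have hopen' : ∀ m, n < m → m ≤ n + d → ¬ ClosedWord (prefW W m) :=
      fun m hm hmd => hopen m hm (by omega)
    rcases Nat.lt_or_ge (j + l) (n + d + 1) with hlt | hge
    · exact ih hopen' hj (by omega) ho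
    · obtain ⟨j', hj', hj'l, ho'⟩ : ∃ j', 0 < j' ∧ j' + l < n + d + 1 ∧ PrefixOccursAt W l j' := by
        by_contra! H
        refine hopen (n + d + 1) (by omega) le_rfl ((closedWord_prefW_iff W (by omega)).2 ?_)
        exact ⟨l, ⟨by omega, by rwa [show n + d + 1 - l = j by omega], H⟩⟩
      exact ih hopen' hj' (by omega) ho'

theorem ClosedWithBorder.not_closedWord_prefW_of_open {m b s : ℕ} (hs : 0 < s)
    (h₁ : ClosedWithBorder W m b) (h₂ : ClosedWithBorder W (m + s) (b + s))
    (hopen : ∀ n, m + s < n → n ≤ m + s + s → ¬ ClosedWord (prefW W n)) :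
    ¬ ClosedWord (prefW W (m + s + s + 1)) := by
  intro hclosed
  have := h₁.lt
  have hper : PrefixOccursAt W (b + s) (m - b) := by
    simpa [show m + s - (b + s) = m - b by omega] using h₂.occurs
  have hne : W (m + s) ≠ W (b + s) := fun heq =>
    hopen (m + s + 1) (by omega) (by omega)
      ((closedWord_prefW_iff W (by omega)).2 ⟨_, h₂.succ heq⟩)
  obtain ⟨V, hV⟩ := (closedWord_prefW_iff W (by omega)).1 hclosed
  have := hV.lt
  have hV_le : V ≤ b + s + 1 := by
    by_contra! hlt
    obtain ⟨j, hj, hjV, ho⟩ := exists_prefixOccursAt_of_not_closedWord hopen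
      (j := m + s + s + 1 - V) (by omega) (by omega) (hV.occurs.mono (Nat.sub_le V 1))
    have := h₂.eq_of_prefixOccursAt hj (by omega) (ho.mono (by omega))
    omega
  have hV_ge : b + s + 1 ≤ V := by
    by_contra! hlt
    have := hV.eq_of_prefixOccursAt (j := m - b) (by omega) (by omega) (hper.mono (by omega))
    omega
  obtain rfl : V = b + s + 1 := le_antisymm hV_le hV_ge
  have hocc : PrefixOccursAt W (b + s + 1) (m - b + s) := by
    simpa [show m + s + s + 1 - (b + s + 1) = m - b + s by omega] using hV.occurs
  have hperiod : PrefixOccursAt W b s := fun k hk => by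
    rw [← hocc k (by omega), ← hper (s + k) (by omega), Nat.add_assoc]
  obtain ⟨c, hc⟩ := h₁.dvd_of_prefixOccursAt hper (by omega) hperiod
  apply hne
  calc W (m + s) = W b := by
        rw [← hocc b (by omega)]
        congr 1
        omega
    _ = W (b + s) := by
        rw [hc, mul_comm, hper.apply_add_mul c (by nlinarith)]

theorem le_of_closedWord_of_not_closedWord {i t s : ℕ} (hs : 0 < s)
    (hC : ∀ n, i < n → n ≤ i + t → ClosedWord (prefW W n))
    (hO : ∀ n, i + t < n → n ≤ i + t + s → ¬ ClosedWord (prefW W n))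
    (hN : ClosedWord (prefW W (i + t + s + 1))) : t ≤ s := by
  by_contra! hst
  obtain ⟨b, hb⟩ := (closedWord_prefW_iff W (by omega)).1 (hC (i + 1) (by omega) (by omega))
  obtain ⟨d, hd⟩ : ∃ d, i + 1 + d + s = i + t := ⟨t - s - 1, by omega⟩
  have h₁ := hb.add_of_closedWord (k := d) fun n hn hnd => hC n (by omega) (by omega)
  have h₂ := h₁.add_of_closedWord (k := s) fun n hn hns => hC n (by omega) (by omega)
  rw [← hd] at hO hN
  exact h₁.not_closedWord_prefW_of_open hs h₂ hO hN

end Run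

lemma infixAt_append {f : ℕ → α} {u v : List α} {i : ℕ} :
    InfixAt f (u ++ v) i ↔ InfixAt f u i ∧ InfixAt f v (i + u.length) := by
  simp only [infixAt_iff_segment, List.length_append, segment_add]
  constructor
  · intro h
    exact List.append_inj h (by simp)
  · rintro ⟨hu, hv⟩
    rw [← hu, ← hv]

lemma infixAt_replicate {f : ℕ → α} {n : ℕ} {x : α} {i : ℕ} :
    InfixAt f (List.replicate n x) i ↔ ∀ k < n, f (i + k) = x := by
  simp [InfixAt, eq_comm (a := List.replicate n x), List.eq_replicate_iff]

lemma closedWord_prefW_of_ocI_eq_one {W : ℕ → α} {n : ℕ} (h : ocI W n = 1) :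
    ClosedWord (prefW W (n + 1)) := by
  by_contra hc
  simp [ocI, hc] at h

lemma not_closedWord_prefW_of_ocI_eq_zero {W : ℕ → α} {n : ℕ} (h : ocI W n = 0) :
    ¬ ClosedWord (prefW W (n + 1)) := by
  intro hc
  simp [ocI, hc] at h

lemma closedWord_prefW_of_infixAt_ocI {W : ℕ → α} {t s i : ℕ}
    (h : InfixAt (ocI W) (List.replicate t 1 ++ List.replicate s 0 ++ [1]) i) :
    (∀ n, i < n → n ≤ i + t → ClosedWord (prefW W n)) ∧
    (∀ n, i + t < n → n ≤ i + t + s → ¬ ClosedWord (prefW W n)) ∧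
    ClosedWord (prefW W (i + t + s + 1)) := by
  simp only [infixAt_append, infixAt_replicate, List.length_replicate] at h
  obtain ⟨⟨hones, hzeros⟩, hone⟩ := h
  refine ⟨fun n hn hnt => ?_, fun n hn hns => ?_, ?_⟩
  · obtain ⟨k, rfl⟩ : ∃ k, n = i + k + 1 := ⟨n - i - 1, by omega⟩
    exact closedWord_prefW_of_ocI_eq_one (hones k (by omega))
  · obtain ⟨k, rfl⟩ : ∃ k, n = i + t + k + 1 := ⟨n - i - t - 1, by omega⟩
    exact not_closedWord_prefW_of_ocI_eq_zero (hzeros k (by omega))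
  · exact closedWord_prefW_of_ocI_eq_one (by simpa [InfixAt, Nat.add_assoc, eq_comm] using hone)

lemma take_eq_prefW_getD (w : List α) (a : α) {n : ℕ} (hn : n ≤ w.length) :
    w.take n = prefW (fun k => w.getD k a) n := by
  apply List.ext_getElem (by simpa using hn)
  intro k hk _
  have hkw : k < w.length := by rw [List.length_take] at hk; omega
  simp [prefW, List.getElem?_eq_getElem hkw]

lemma ocL_eq_prefW_ocI (w : List α) (a : α) :
    ocL w = prefW (ocI fun k => w.getD k a) w.length := by
  simp only [ocL, ocI, prefW, List.map_inj_left, List.mem_range]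
  intro n hn
  rw [take_eq_prefW_getD w a hn]
  rfl

lemma exists_infixAt_of_isInfix_prefW {f : ℕ → α} {u : List α} {n : ℕ}
    (h : u <:+: prefW f n) : ∃ i, InfixAt f u i :=
  let ⟨p, _, h⟩ := h
  ⟨p.length, infixAt_of_prefW_eq f h.symm⟩

lemma exists_infixAt_ocI_of_isInfix_ocL {w : List α} {u : List ℕ} (hu : u ≠ [])
    (h : u <:+: ocL w) : ∃ (W : ℕ → α) (i : ℕ), InfixAt (ocI W) u i := by
  rcases w with _ | ⟨a, w⟩
  · simp [ocL, hu] at h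
  · rw [ocL_eq_prefW_ocI _ a] at h
    exact ⟨_, exists_infixAt_of_isInfix_prefW h⟩

end ClosedPrefix

theorem stmt9_general {α : Type*} (s t : ℕ) (hs : 0 < s) :
    (∀ w : List α,
      (List.replicate t 1 ++ List.replicate s 0 ++ [1]) <:+: ocL w → t ≤ s) ∧
    (∀ w : ℕ → α,
      (∃ i, InfixAt (ocI w) (List.replicate t 1 ++ List.replicate s 0 ++ [1]) i) → t ≤ s) := by
  have key : ∀ (W : ℕ → α) (i : ℕ),
      InfixAt (ocI W) (List.replicate t 1 ++ List.replicate s 0 ++ [1]) i → t ≤ s := by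
    intro W i h
    obtain ⟨hC, hO, hN⟩ := ClosedPrefix.closedWord_prefW_of_infixAt_ocI h
    exact ClosedPrefix.le_of_closedWord_of_not_closedWord hs hC hO hN
  refine ⟨fun w h => ?_, fun W ⟨i, h⟩ => key W i h⟩
  obtain ⟨W, i, h⟩ := ClosedPrefix.exists_infixAt_ocI_of_isInfix_ocL (by simp) h
  exact key W i h

theorem stmt9 {α : Type*} [Fintype α] (s t : ℕ) (hs : 0 < s) (ht : 0 < t) :
    (∀ w : List α,
      (List.replicate t 1 ++ List.replicate s 0 ++ [1]) <:+: ocL w → t ≤ s) ∧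
    (∀ w : ℕ → α,
      (∃ i, InfixAt (ocI w) (List.replicate t 1 ++ List.replicate s 0 ++ [1]) i) → t ≤ s) :=
  stmt9_general s t hs
end

section
/- Let w be a right special Sturmian word (a finite word over {a,b} such that both wa and wb are factors of Sturmian words, equivalently are balanced) and let u be its longest repeated prefix. Then u is a suffix of w. -/
open scoped Classical

variable {α : Type*}

/-!
Let `u` be the longest repeated prefix of `w` and suppose it is not a suffix. Then a later
occurrence of `u` is followed by a letter, and that letter must differ from the one following the
prefix occurrence, since otherwise a longer prefix would repeat; so both `ua` and `ub` are factors
of `w`. Let `s` be the suffix of `w` of length `|u|` and `v` the longest common suffix of `u` and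
`s`, so that `u` ends with `cv` and `s` with `c̄v` for some letter `c`. Then `cvc` is a factor of
`uc`, hence of `w`, while `c̄vc̄` is a suffix of `wc̄`: these two factors of `wc̄` of equal length
differ by two in their number of `c`'s, contradicting the balance of `wc̄`.
-/

def IsLongestRepeatedPrefix (u w : List α) : Prop :=
  u <+: w ∧ RepeatedIn u w ∧ ∀ v, v <+: w → RepeatedIn v w → v.length ≤ u.length

theorem exists_common_prefix_of_ne :
    ∀ {l₁ l₂ : List α}, l₁.length = l₂.length → l₁ ≠ l₂ →
      ∃ r c d t₁ t₂, c ≠ d ∧ l₁ = r ++ c :: t₁ ∧ l₂ = r ++ d :: t₂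
  | [], [], _, hne => absurd rfl hne
  | a :: t₁, b :: t₂, hlen, hne => by
    by_cases hab : a = b
    · subst hab
      obtain ⟨r, c, d, s₁, s₂, hcd, rfl, rfl⟩ :=
        exists_common_prefix_of_ne (by simpa using hlen) (fun h => hne (by rw [h]))
      exact ⟨a :: r, c, d, s₁, s₂, hcd, rfl, rfl⟩
    · exact ⟨[], a, b, t₁, t₂, hab, rfl, rfl⟩

theorem exists_common_suffix_of_ne {l₁ l₂ : List α} (hlen : l₁.length = l₂.length)
    (hne : l₁ ≠ l₂) : ∃ p₁ p₂ c d v, c ≠ d ∧ l₁ = p₁ ++ c :: v ∧ l₂ = p₂ ++ d :: v := by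
  obtain ⟨r, c, d, t₁, t₂, hcd, h₁, h₂⟩ :=
    exists_common_prefix_of_ne (l₁ := l₁.reverse) (l₂ := l₂.reverse) (by simpa using hlen)
      (fun h => hne (List.reverse_injective h))
  refine ⟨t₁.reverse, t₂.reverse, c, d, r.reverse, hcd, ?_, ?_⟩
  · simpa using congrArg List.reverse h₁
  · simpa using congrArg List.reverse h₂

section OccurrenceAt

variable {u w : List α} {i : ℕ}

theorem OccurrenceAt.isInfix (h : OccurrenceAt u w i) : u <:+: w :=
  h.2.isInfix.trans (List.drop_suffix i w).isInfix

theorem occurrenceAt_zero_of_prefix (h : u <+: w) : OccurrenceAt u w 0 :=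
  ⟨by simpa using h.length_le, by simpa using h⟩

theorem OccurrenceAt.isSuffix (h : OccurrenceAt u w i) (hend : i + u.length = w.length) :
    u <:+ w := by
  have : u = w.drop i := h.2.eq_of_length (by simp; omega)
  exact this ▸ List.drop_suffix i w

theorem OccurrenceAt.append_getElem (h : OccurrenceAt u w i) (hi : i + u.length < w.length) :
    OccurrenceAt (u ++ [w[i + u.length]]) w i := by
  refine ⟨by simp; omega, ?_⟩
  have hlen : u.length < (w.drop i).length := by simp; omega
  have hu : u = (w.drop i).take u.length := List.prefix_iff_eq_take.mp h.2
  have hnext : (w.drop i)[u.length] = w[i + u.length] := List.getElem_drop ..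
  rw [List.prefix_iff_eq_take, List.length_append, List.length_singleton,
    List.take_succ_eq_append_getElem hlen, ← hu, hnext]

end OccurrenceAt

theorem IsLongestRepeatedPrefix.exists_ne_append_infix {u w : List α}
    (hu : IsLongestRepeatedPrefix u w) (hsuf : ¬ u <:+ w) :
    ∃ x y : α, x ≠ y ∧ u ++ [x] <:+: w ∧ u ++ [y] <:+: w := by
  obtain ⟨hpre, ⟨i, j, hij, -, hj⟩, hmax⟩ := hu
  have hjlt : j + u.length < w.length := lt_of_le_of_ne hj.1 (fun h => hsuf (hj.isSuffix h))
  have hx := (occurrenceAt_zero_of_prefix hpre).append_getElem (by omega)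
  have hy := hj.append_getElem hjlt
  refine ⟨_, _, fun hxy => ?_, hx.isInfix, hy.isInfix⟩
  have hrep : RepeatedIn (u ++ [w[0 + u.length]]) w := ⟨0, j, by omega, hx, hxy ▸ hy⟩
  have := hmax _ (by simpa using hx.2) hrep
  simp at this

theorem BalancedWord.not_infix_and_infix_not {w : List Bool} (hw : BalancedWord w) (c : Bool)
    (v : List Bool) : ¬ (c :: v ++ [c] <:+: w ∧ (!c) :: v ++ [!c] <:+: w) := by
  rintro ⟨h₁, h₂⟩
  have := hw _ _ h₁ h₂ (by simp)
  cases c <;> simp [List.count_append] at this <;> omega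

theorem RightSpecialSturmian.isSuffix_of_forall_append_infix {w u : List Bool}
    (hw : RightSpecialSturmian w) (hu : ∀ z, u ++ [z] <:+: w) (hlen : u.length ≤ w.length) :
    u <:+ w := by
  set s := w.drop (w.length - u.length)
  have hs : s <:+ w := List.drop_suffix _ _
  by_contra hsuf
  have hne : u ≠ s := fun h => hsuf (h ▸ hs)
  obtain ⟨p₁, p₂, c, d, v, hcd, rfl, hs'⟩ := exists_common_suffix_of_ne (by simp [s]; omega) hne
  obtain rfl : d = !c := Bool.eq_not_of_ne hcd.symm
  refine (hw (!c)).not_infix_and_infix_not c v ⟨?_, ?_⟩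
  · have : c :: v ++ [c] <:+ p₁ ++ c :: v ++ [c] := by simp
    exact (this.isInfix.trans (hu c)).trans (List.prefix_append w _).isInfix
  · have : (!c) :: v <:+ w := (hs' ▸ List.suffix_append p₂ _).trans hs
    exact (List.suffix_append_self_iff.mpr this).isInfix

theorem stmt10 (w : List Bool) (h : RightSpecialSturmian w) (u : List Bool)
    (hu : u <+: w ∧ RepeatedIn u w ∧ ∀ v, v <+: w → RepeatedIn v w → v.length ≤ u.length) :
    u <:+ w := by
  by_contra hsuf
  obtain ⟨x, y, hxy, hx, hy⟩ := IsLongestRepeatedPrefix.exists_ne_append_infix hu hsuf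
  have hboth : ∀ z, u ++ [z] <:+: w := by
    intro z
    obtain rfl | rfl : z = x ∨ z = y := by cases x <;> cases y <;> cases z <;> simp_all
    exacts [hx, hy]
  exact hsuf (h.isSuffix_of_forall_append_infix hboth hu.1.length_le)
end

section
/- A binary word s over {a,b} is not balanced if and only if there exists a palindrome v such that both ava and bvb are factors of s. -/
/-
Take a shortest unbalanced pair of factors `u`, `v`, with `u` having at least two more `true`s;
all shorter pairs of factors are then balanced. Comparing initial and final factors forces
`u = true x true` and `v = false y false` with `x`, `y` of equal weight. Comparing prefixes of
`x` and `y`, and suffixes, shows that `x` and `y` have the same prefix weights, so `x = y`;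
comparing prefixes of `u` with suffixes of `v` shows that `x` and its reversal have the same
prefix weights, so `x` is a palindrome.
-/

open scoped Classical

variable {α : Type*}

def FactorsBalancedBelow (n : ℕ) (u v : List Bool) : Prop :=
  ∀ u' v' : List Bool, u' <:+: u → v' <:+: v → u'.length = v'.length → u'.length < n →
    ((u'.count true : ℤ) - v'.count true).natAbs ≤ 1

theorem List.eq_of_forall_count_true_take_eq {x y : List Bool} (hlen : x.length = y.length)
    (h : ∀ k ≤ x.length, (x.take k).count true = (y.take k).count true) : x = y := by
  induction x generalizing y with
  | nil => simpa [eq_comm] using hlen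
  | cons a x ih =>
    obtain _ | ⟨b, y⟩ := y
    · simp at hlen
    have hab : a = b := by
      have := h 1 (by simp)
      cases a <;> cases b <;> simp_all
    subst hab
    refine congrArg _ (ih (by simpa using hlen) fun k hk => ?_)
    simpa [List.count_cons] using h (k + 1) (by simpa using hk)

namespace FactorsBalancedBelow

variable {a b c d : Bool} {x y : List Bool}

theorem ends_of_unbalanced (hlen : x.length = y.length)
    (hcount : (b :: (y ++ [d])).count true + 2 ≤ (a :: (x ++ [c])).count true)
    (h : FactorsBalancedBelow (x.length + 2) (a :: (x ++ [c])) (b :: (y ++ [d]))) :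
    a = true ∧ c = true ∧ b = false ∧ d = false ∧ x.count true = y.count true := by
  have hinit := h (a :: x) (b :: y) ⟨[], [c], by simp⟩ ⟨[], [d], by simp⟩ (by simp [hlen])
    (by simp)
  have htail := h (x ++ [c]) (y ++ [d]) ⟨[a], [], by simp⟩ ⟨[b], [], by simp⟩ (by simp [hlen])
    (by simp)
  have hmid := h x y ⟨[a], [c], by simp⟩ ⟨[b], [d], by simp⟩ hlen (by omega)
  cases a <;> cases b <;> cases c <;> cases d <;>
    simp +decide only [List.count_cons, List.count_append, List.count_nil, if_true, if_false,
      true_and] at hinit htail hmid hcount ⊢ <;>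
    omega

theorem eq_of_count_eq (hlen : x.length = y.length) (hcount : x.count true = y.count true)
    (h : FactorsBalancedBelow (x.length + 2) (true :: (x ++ [true])) (false :: (y ++ [false]))) :
    x = y := by
  refine List.eq_of_forall_count_true_take_eq hlen fun k hk => ?_
  have hpre := h (true :: x.take k) (false :: y.take k)
    ⟨[], x.drop k ++ [true], by simp [← List.append_assoc]⟩
    ⟨[], y.drop k ++ [false], by simp [← List.append_assoc]⟩ (by simp [hlen]) (by simp)
  have hsuf := h (x.drop k ++ [true]) (y.drop k ++ [false])
    ⟨true :: x.take k, [], by simp [← List.append_assoc]⟩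
    ⟨false :: y.take k, [], by simp [← List.append_assoc]⟩ (by simp [hlen]) (by simp)
  have hx : (x.take k).count true + (x.drop k).count true = x.count true := by
    rw [← List.count_append, List.take_append_drop]
  have hy : (y.take k).count true + (y.drop k).count true = y.count true := by
    rw [← List.count_append, List.take_append_drop]
  simp +decide only [List.count_cons, List.count_append, List.count_nil, if_true, if_false]
    at hpre hsuf
  omega

theorem reverse_eq
    (h : FactorsBalancedBelow (x.length + 2) (true :: (x ++ [true])) (false :: (x ++ [false]))) :
    x.reverse = x := by
  refine List.eq_of_forall_count_true_take_eq (by simp) fun k hk => ?_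
  rw [List.length_reverse] at hk
  rw [List.take_reverse, List.count_reverse]
  have hpre := h (true :: x.take k) (x.drop (x.length - k) ++ [false])
    ⟨[], x.drop k ++ [true], by simp [← List.append_assoc]⟩
    ⟨false :: x.take (x.length - k), [], by simp [← List.append_assoc]⟩ (by simp; omega) (by simp)
  have hsuf := h (x.drop (x.length - k) ++ [true]) (false :: x.take k)
    ⟨true :: x.take (x.length - k), [], by simp [← List.append_assoc]⟩
    ⟨[], x.drop k ++ [false], by simp [← List.append_assoc]⟩ (by simp; omega) (by simp)
  simp +decide only [List.count_cons, List.count_append, List.count_nil, if_true, if_false]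
    at hpre hsuf
  omega

end FactorsBalancedBelow

theorem List.exists_eq_cons_append_singleton {l : List α} (hl : 2 ≤ l.length) :
    ∃ a x c, l = a :: (x ++ [c]) := by
  obtain _ | ⟨a, t⟩ := l
  · simp at hl
  obtain rfl | ⟨x, c, rfl⟩ := t.eq_nil_or_concat
  · simp at hl
  · exact ⟨a, x, c, by simp⟩

theorem exists_palindrome_of_factorsBalancedBelow {u v : List Bool} (hlen : u.length = v.length)
    (hcount : v.count true + 2 ≤ u.count true) (h : FactorsBalancedBelow u.length u v) :
    ∃ w, w.reverse = w ∧ u = true :: (w ++ [true]) ∧ v = false :: (w ++ [false]) := by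
  have hu : 2 ≤ u.length := by have := u.count_le_length (a := true); omega
  obtain ⟨a, x, c, rfl⟩ := List.exists_eq_cons_append_singleton hu
  obtain ⟨b, y, d, rfl⟩ := List.exists_eq_cons_append_singleton (hlen ▸ hu)
  simp only [List.length_cons, List.length_append] at hlen h
  have hxy : x.length = y.length := by omega
  obtain ⟨rfl, rfl, rfl, rfl, hxy_count⟩ := h.ends_of_unbalanced hxy hcount
  obtain rfl := h.eq_of_count_eq hxy hxy_count
  exact ⟨x, h.reverse_eq, rfl, rfl⟩

theorem exists_minimal_unbalanced_factors {s : List Bool} (hs : ¬ BalancedWord s) :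
    ∃ u v : List Bool, u <:+: s ∧ v <:+: s ∧ u.length = v.length ∧
      v.count true + 2 ≤ u.count true ∧ FactorsBalancedBelow u.length u v := by
  have hP : ∃ n, ∃ u v : List Bool, u <:+: s ∧ v <:+: s ∧ u.length = n ∧ v.length = n ∧
      v.count true + 2 ≤ u.count true := by
    simp only [BalancedWord, not_forall, not_le] at hs
    obtain ⟨u, v, hu, hv, hlen, huv⟩ := hs
    rcases (by omega : v.count true + 2 ≤ u.count true ∨ u.count true + 2 ≤ v.count true)
      with h | h
    · exact ⟨_, u, v, hu, hv, rfl, hlen.symm, h⟩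
    · exact ⟨_, v, u, hv, hu, hlen.symm, rfl, h⟩
  obtain ⟨u, v, hu, hv, hun, hvn, huv⟩ := Nat.find_spec hP
  refine ⟨u, v, hu, hv, hun.trans hvn.symm, huv, fun u' v' hu' hv' hlen hlt => ?_⟩
  rw [hun] at hlt
  by_contra hne
  rcases (by omega : v'.count true + 2 ≤ u'.count true ∨ u'.count true + 2 ≤ v'.count true)
    with h | h
  · exact Nat.find_min hP hlt ⟨u', v', hu'.trans hu, hv'.trans hv, rfl, hlen.symm, h⟩
  · exact Nat.find_min hP hlt ⟨v', u', hv'.trans hv, hu'.trans hu, hlen.symm, rfl, h⟩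

theorem stmt13 (s : List Bool) :
    ¬ BalancedWord s ↔
      ∃ v : List Bool, v.reverse = v ∧
        ([false] ++ v ++ [false]) <:+: s ∧ ([true] ++ v ++ [true]) <:+: s := by
  constructor
  · intro hs
    obtain ⟨u, v, hu, hv, hlen, hcount, hmin⟩ := exists_minimal_unbalanced_factors hs
    obtain ⟨w, hw, rfl, rfl⟩ := exists_palindrome_of_factorsBalancedBelow hlen hcount hmin
    exact ⟨w, hw, by simpa using hv, by simpa using hu⟩
  · rintro ⟨v, -, hfalse, htrue⟩ hs
    have := hs _ _ htrue hfalse (by simp)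
    simp +decide only [List.count_cons, List.count_append, List.count_nil, if_true, if_false]
      at this
    omega
end

section
/- Every central word is closed. More precisely, a central word v that is not a power of a single letter can be written as v = p x y q = q y x p for central words p, q and distinct letters x, y, and v is a complete return to the longer of p and q. -/
open scoped Classical

variable {α : Type*}

/-!
Write the standard word `v x y` as `stdSeq d (m + 2) = s ^ (d m) s'` with `s = stdSeq d (m + 1)` and
`s' = stdSeq d m`, and split it as `P₁ P₂` with `P₁ = s`, `P₂ = s ^ (d m - 1) s'`. Both are
standard, their lengths are coprime, and `P₁ P₂`, `P₂ P₁` differ only by a swap of their last two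
letters; hence `P₁ = p b a`, `P₂ = q a b` with `p`, `q` central and `v = p b a q = q a b p`.
So `v` has the coprime periods `|p| + 2` and `|q| + 2`; say `|p| < |q|`. An occurrence of `q` in
`v` at a position `0 < i < |p| + 2` would, by the Fine–Wilf theorem, give `v` the period
`gcd i (|p| + 2)` and then, together with the coprime period `|q| + 2`, the period `1`. Unless `v`
is a power of a letter, it is therefore a complete return to `q`, hence closed.
-/

open List

namespace List

theorem hasPeriod_of_drop_prefix {w : List α} {p : ℕ} (h : w.drop p <+: w) : w.HasPeriod p := by
  have := (prefix_append_right_inj (w.take p)).mpr h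
  rwa [take_append_drop] at this

theorem hasPeriod_take_of_isPrefix_drop {v t : List α} {i : ℕ} (ht : t <+: v)
    (hti : t <+: v.drop i) : (v.take (i + t.length)).HasPeriod i := by
  apply hasPeriod_of_drop_prefix
  rw [drop_take, Nat.add_sub_cancel_left, ← prefix_iff_eq_take.mp hti]
  have := ht.take (i + t.length)
  rwa [take_of_length_le (by omega)] at this

theorem HasPeriod.of_take {v : List α} {s n g : ℕ} (hs : v.HasPeriod s) (hs₀ : 0 < s)
    (hsn : s ≤ n) (hg : (v.take n).HasPeriod g) (hgs : g ∣ s) : v.HasPeriod g := by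
  rw [hasPeriod_iff_forall_getElem?_mod] at hs hg ⊢
  intro j hj
  have hjs : j % s < n := (Nat.mod_lt j hs₀).trans_le hsn
  have hjg : j % g < n := ((Nat.mod_lt j (Nat.pos_of_dvd_of_pos hgs hs₀)).trans_le
    (Nat.le_of_dvd hs₀ hgs)).trans_le hsn
  have hjv : j % s < (v.take n).length := by
    rw [length_take]
    have := Nat.mod_le j s
    omega
  rw [hs j hj, ← getElem?_take_of_lt hjs, hg _ hjv, Nat.mod_mod_of_dvd j hgs,
    getElem?_take_of_lt hjg]

theorem HasPeriod.eq_replicate_of_mem {v : List α} {c : α} (h : v.HasPeriod 1) (hc : c ∈ v) :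
    v = replicate v.length c := by
  have hconst : ∀ b ∈ v, v[0]? = some b := fun b hb => by
    obtain ⟨j, hj⟩ := mem_iff_getElem?.mp hb
    obtain ⟨hjv, -⟩ := getElem?_eq_some_iff.mp hj
    rw [← hj, hasPeriod_iff_forall_getElem?_mod.mp h j hjv, Nat.mod_one]
  exact eq_replicate_iff.mpr
    ⟨rfl, fun b hb => Option.some_inj.mp ((hconst b hb).symm.trans (hconst c hc))⟩

theorem eq_replicate_of_cons_eq_append_singleton {a : α} :
    ∀ {v : List α}, a :: v = v ++ [a] → v = replicate v.length a
  | [], _ => rfl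
  | x :: w, h => by
    obtain ⟨rfl, hw⟩ : a = x ∧ x :: w = w ++ [a] := by simpa using h
    rw [length_cons, replicate_succ, ← eq_replicate_of_cons_eq_append_singleton hw]

theorem exists_eq_append_of_append_eq_append {X Y v l : List α} (h : X ++ Y = v ++ l)
    (hl : l.length ≤ Y.length) : ∃ y, Y = y ++ l ∧ v = X ++ y := by
  rcases append_eq_append_iff.mp h with ⟨y, hv, hY⟩ | ⟨z, hX, hl'⟩
  · exact ⟨y, hY, hv⟩
  · obtain rfl : z = [] := by simpa [hl'] using hl
    simp_all

end List

theorem closedWord_replicate (n : ℕ) (c : α) : ClosedWord (replicate n c) := by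
  rcases n with _ | k
  · exact Or.inl rfl
  refine Or.inr ⟨replicate k c, ⟨⟨[c], (replicate_succ' ..).symm⟩, ⟨[c], (replicate_succ ..).symm⟩,
    fun h => by simpa using congrArg length h⟩, ?_⟩
  rintro ⟨p, s, hp, hs, h⟩
  have := congrArg length h
  simp only [length_replicate, length_append] at this
  have := length_pos_iff.mpr hp
  have := length_pos_iff.mpr hs
  omega

theorem CompleteReturnTo.closedWord {v t : List α} (h : CompleteReturnTo v t) : ClosedWord v := by
  obtain ⟨hpre, hsuf, hne, hocc⟩ := h
  refine Or.inr ⟨t, ⟨hpre, hsuf, hne⟩, ?_⟩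
  rintro ⟨p, s, hp, hs, rfl⟩
  have := length_pos_iff.mpr hp
  have := length_pos_iff.mpr hs
  have hi : OccurrenceAt t (p ++ t ++ s) p.length :=
    ⟨by simp, by rw [append_assoc, drop_left]; exact prefix_append _ _⟩
  have := hocc _ hi
  simp only [length_append] at this
  omega

theorem completeReturnTo_of_eq_append {v r t : List α} {x y x' y' : α}
    (h₁ : v = r ++ [x, y] ++ t) (h₂ : v = t ++ [x', y'] ++ r) (hrt : r.length < t.length)
    (hcop : (r.length + 2).Coprime (t.length + 2)) (hv : ¬ ∃ c n, v = replicate n c) :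
    CompleteReturnTo v t := by
  have hlen : v.length = t.length + (r.length + 2) := by
    simp only [h₁, length_append, length_cons, length_nil]
    omega
  have htv : t <+: v := ⟨_, by rw [h₂, append_assoc]⟩
  have hrv : r <+: v := ⟨_, by rw [h₁, append_assoc]⟩
  have hs : v.HasPeriod (r.length + 2) :=
    hasPeriod_of_drop_prefix <| by rwa [show v.drop _ = t by rw [h₁, drop_left' (by simp)]]
  have hπ : v.HasPeriod (t.length + 2) :=
    hasPeriod_of_drop_prefix <| by rwa [show v.drop _ = r by rw [h₂, drop_left' (by simp)]]
  refine ⟨htv, ⟨_, h₁.symm⟩, fun h => by rw [← h] at hlen; omega, fun i ⟨hi, hti⟩ => ?_⟩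
  by_contra! hne
  set s := r.length + 2
  set g := i.gcd s
  have hi₀ : 0 < i := Nat.pos_of_ne_zero hne.1
  have hg₀ : 0 < g := Nat.gcd_pos_of_pos_left s hi₀
  have hgi : g ≤ i := Nat.le_of_dvd hi₀ (Nat.gcd_dvd_left i s)
  have hgu : (v.take (i + t.length)).HasPeriod g :=
    (hasPeriod_take_of_isPrefix_drop htv hti).gcd (hs.infix (take_prefix _ _).isInfix)
      (by rw [length_take]; omega)
  have hgv : v.HasPeriod g := hs.of_take (by omega) (by omega) hgu (Nat.gcd_dvd_right i s)
  have hcop' : g.Coprime (t.length + 2) := hcop.coprime_dvd_left (Nat.gcd_dvd_right i s)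
  have h1 : v.HasPeriod 1 := by
    simpa [hcop'.gcd_eq_one] using hgv.gcd hπ (by rw [hcop'.gcd_eq_one]; omega)
  obtain ⟨c, hc⟩ : ∃ c, c ∈ v := exists_mem_of_ne_nil v (by rintro rfl; simp at hlen)
  exact hv ⟨c, _, h1.eq_replicate_of_mem hc⟩

theorem exists_eq_replicate_of_swap_of_length_le_one {P₁ P₂ v : List α} {a b : α} (hab : a ≠ b)
    (h₁ : P₁ ++ P₂ = v ++ [a, b]) (h₂ : P₂ ++ P₁ = v ++ [b, a]) (hP₁ : P₁.length ≤ 1) :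
    ∃ c n, v = replicate n c := by
  match P₁, hP₁ with
  | [], _ =>
    rw [nil_append] at h₁
    obtain ⟨hab', -⟩ : a = b ∧ b = a := by simpa [h₁] using h₂
    exact absurd hab' hab
  | [c], _ =>
    rw [show v ++ [b, a] = (v ++ [b]) ++ [a] by simp] at h₂
    obtain ⟨rfl, hc⟩ := append_inj' h₂ rfl
    obtain rfl : c = a := by simpa using hc
    have hv : (c :: v) ++ [b] = (v ++ [c]) ++ [b] := by simpa using h₁
    exact ⟨c, _, eq_replicate_of_cons_eq_append_singleton (append_cancel_right hv)⟩

theorem exists_eq_append_pair_of_swap {P₁ P₂ v : List α} {a b : α}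
    (h₁ : P₁ ++ P₂ = v ++ [a, b]) (h₂ : P₂ ++ P₁ = v ++ [b, a])
    (hP₁ : 2 ≤ P₁.length) (hP₂ : 2 ≤ P₂.length) :
    ∃ p q, P₁ = p ++ [b, a] ∧ P₂ = q ++ [a, b] ∧ v = p ++ [b, a] ++ q ∧ v = q ++ [a, b] ++ p := by
  obtain ⟨p, rfl, rfl⟩ := exists_eq_append_of_append_eq_append h₂ (by simpa using hP₁)
  obtain ⟨q, hq, hv⟩ := exists_eq_append_of_append_eq_append h₁ (by simpa using hP₂)
  exact ⟨p, q, rfl, hq, by simpa using hv, by rw [hq]⟩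

theorem exists_completeReturnTo_of_swap {P₁ P₂ v : List α} {a b : α} (hab : a ≠ b)
    (hcop : P₁.length.Coprime P₂.length) (h₁ : P₁ ++ P₂ = v ++ [a, b])
    (h₂ : P₂ ++ P₁ = v ++ [b, a]) (hv : ¬ ∃ c n, v = replicate n c) :
    ∃ p q, P₁ = p ++ [b, a] ∧ P₂ = q ++ [a, b] ∧ v = p ++ [b, a] ++ q ∧ v = q ++ [a, b] ++ p ∧
      CompleteReturnTo v (if p.length ≤ q.length then q else p) := by
  have hP₁ : 2 ≤ P₁.length := by
    by_contra h
    exact hv (exists_eq_replicate_of_swap_of_length_le_one hab h₁ h₂ (by omega))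
  have hP₂ : 2 ≤ P₂.length := by
    by_contra h
    exact hv (exists_eq_replicate_of_swap_of_length_le_one hab.symm h₂ h₁ (by omega))
  obtain ⟨p, q, rfl, rfl, hv₁, hv₂⟩ := exists_eq_append_pair_of_swap h₁ h₂ hP₁ hP₂
  refine ⟨p, q, rfl, rfl, hv₁, hv₂, ?_⟩
  simp only [length_append, length_cons, length_nil] at hcop
  have hpq : p.length ≠ q.length := fun h => by
    rw [h, Nat.coprime_self] at hcop
    omega
  split_ifs with hle
  · exact completeReturnTo_of_eq_append hv₁ hv₂ (by omega) hcop hv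
  · exact completeReturnTo_of_eq_append hv₂ hv₁ (by omega) hcop.symm hv

def SwapsLastTwo (u v : List α) : Prop :=
  ∃ w a b, a ≠ b ∧ u ++ v = w ++ [a, b] ∧ v ++ u = w ++ [b, a]

theorem SwapsLastTwo.flatten_replicate_append {u v : List α} (h : SwapsLastTwo u v) (e : ℕ) :
    SwapsLastTwo v ((replicate e v).flatten ++ u) := by
  obtain ⟨w, a, b, hab, h₁, h₂⟩ := h
  have hcomm : v ++ (replicate e v).flatten = (replicate e v).flatten ++ v := by
    rw [← flatten_cons, ← replicate_succ, replicate_succ', flatten_append, flatten_singleton]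
  refine ⟨(replicate e v).flatten ++ w, b, a, hab.symm, ?_, ?_⟩
  · rw [← append_assoc, hcomm, append_assoc, h₂, append_assoc]
  · rw [append_assoc, h₁, append_assoc]

theorem Nat.Coprime.length_flatten_replicate_append {u v : List α}
    (h : u.length.Coprime v.length) (e : ℕ) :
    v.length.Coprime ((replicate e v).flatten ++ u).length := by
  rw [length_append, length_flatten, map_replicate, sum_replicate, smul_eq_mul,
    Nat.coprime_mul_right_add_right]
  exact h.symm

theorem swapsLastTwo_stdSeq (d : ℕ → ℕ) : ∀ m, SwapsLastTwo (stdSeq d m) (stdSeq d (m + 1))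
  | 0 => ⟨[], true, false, by decide, rfl, rfl⟩
  | m + 1 => (swapsLastTwo_stdSeq d m).flatten_replicate_append (d m)

theorem coprime_length_stdSeq (d : ℕ → ℕ) :
    ∀ m, (stdSeq d m).length.Coprime (stdSeq d (m + 1)).length
  | 0 => by simp [stdSeq]
  | m + 1 => (coprime_length_stdSeq d m).length_flatten_replicate_append (d m)

theorem stdSeq_congr {d d' : ℕ → ℕ} : ∀ {n}, (∀ k, k + 2 ≤ n → d k = d' k) →
    stdSeq d n = stdSeq d' n
  | 0, _ => rfl
  | 1, _ => rfl
  | n + 2, h => by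
    rw [stdSeq, stdSeq, h n le_rfl, stdSeq_congr fun k hk => h k (by omega),
      stdSeq_congr fun k hk => h k (by omega)]

theorem isStandardWord_flatten_replicate_stdSeq_append {d : ℕ → ℕ} (hd : ∀ n, 1 ≤ n → 1 ≤ d n)
    (m e : ℕ) : IsStandardWord ((replicate e (stdSeq d (m + 1))).flatten ++ stdSeq d m) := by
  rcases e with _ | e
  · exact ⟨d, hd, m, by simp⟩
  refine ⟨Function.update d m (e + 1), fun n hn => ?_, m + 2, ?_⟩
  · rcases eq_or_ne n m with rfl | hnm
    · simp
    · rw [Function.update_of_ne hnm]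
      exact hd n hn
  · have hagree : ∀ n ≤ m + 1, stdSeq (Function.update d m (e + 1)) n = stdSeq d n :=
      fun n hn => stdSeq_congr fun k hk => Function.update_of_ne (by omega) _ _
    rw [stdSeq, Function.update_self, hagree (m + 1) le_rfl, hagree m (by omega)]

theorem IsStandardWord.exists_swapsLastTwo {w : List Bool} (hw : IsStandardWord w)
    (h2 : 2 ≤ w.length) :
    ∃ P₁ P₂, IsStandardWord P₁ ∧ IsStandardWord P₂ ∧ P₁.length.Coprime P₂.length ∧
      SwapsLastTwo P₁ P₂ ∧ w = P₁ ++ P₂ := by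
  obtain ⟨d, hd, m, rfl⟩ := hw
  obtain _ | _ | m := m
  · simp [stdSeq] at h2
  · simp [stdSeq] at h2
  obtain ⟨e, he⟩ : ∃ e, d m = e + 1 := by
    refine Nat.exists_eq_add_one.mpr ?_
    rcases m with _ | m
    · by_contra h0
      simp [stdSeq, show d 0 = 0 by omega] at h2
    · exact hd _ (by omega)
  refine ⟨stdSeq d (m + 1), (replicate e (stdSeq d (m + 1))).flatten ++ stdSeq d m,
    ⟨d, hd, m + 1, rfl⟩, isStandardWord_flatten_replicate_stdSeq_append hd m e,
    (coprime_length_stdSeq d m).length_flatten_replicate_append e,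
    (swapsLastTwo_stdSeq d m).flatten_replicate_append e, ?_⟩
  rw [stdSeq, he, replicate_succ, flatten_cons, append_assoc]

theorem stmt15 (v : List Bool) (h : IsCentral v) :
    ClosedWord v ∧
      ((¬ ∃ (x : Bool) (n : ℕ), v = List.replicate n x) →
        ∃ (p q : List Bool) (x y : Bool), IsCentral p ∧ IsCentral q ∧ x ≠ y ∧
          v = p ++ [x, y] ++ q ∧ v = q ++ [y, x] ++ p ∧
          CompleteReturnTo v (if p.length ≤ q.length then q else p)) := by
  obtain ⟨x, y, -, hstd⟩ := h
  obtain ⟨P₁, P₂, hs₁, hs₂, hcop, ⟨w, a, b, hab, h₁, h₂⟩, hw⟩ :=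
    hstd.exists_swapsLastTwo (by simp)
  obtain rfl : v = w := (append_inj' (hw.trans h₁) rfl).1
  by_cases hpow : ∃ (c : Bool) (n : ℕ), v = replicate n c
  · obtain ⟨c, n, rfl⟩ := hpow
    exact ⟨closedWord_replicate n c, fun h => (h ⟨c, n, rfl⟩).elim⟩
  obtain ⟨p, q, rfl, rfl, hv₁, hv₂, hret⟩ := exists_completeReturnTo_of_swap hab hcop h₁ h₂ hpow
  exact ⟨hret.closedWord, fun _ =>
    ⟨p, q, b, a, ⟨b, a, hab.symm, hs₁⟩, ⟨a, b, hab, hs₂⟩, hab.symm, hv₁, hv₂, hret⟩⟩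
end
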